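/- Let p be prime and a, b, m, n ∈ {1,...,p-1} with a ≠ b and (m,n) ≠ (p-1,p-1). Then the sum over k from 0 to p-1 of (a+k)^m · (b+k)^n is congruent mod p to -(a-b)^(m+n) · C(m, p-1-n). -/

import Mathlib

/-!
The substitution `y = b + x` turns the sum into `∑_y (y + c)^m y^n` over `𝔽_p` with `c = a - b ≠ 0`.
Expanding `(y + c)^m` reduces it to the power sums `∑_y y^i`, which vanish unless `i > 0` and
`p - 1 ∣ i`, in which case they equal `-1`. As `m + n < 2(p - 1)`, only the binomial term with
`j + n = p - 1` survives, and `c^(p-1) = 1` turns its coefficient `c^(m-j)` into `c^(m+n)`.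
-/

open Finset

namespace FiniteField

variable {K : Type*} [Field K] [Fintype K]

local notation "q" => Fintype.card K

theorem sum_pow_eq_sum_units_pow [DecidableEq K] {i : ℕ} (hi : i ≠ 0) :
    ∑ x : K, x ^ i = ∑ x : Kˣ, (x : K) ^ i := by
  rw [← sum_erase univ (zero_pow hi)]
  have : univ.erase (0 : K) = univ.map ⟨Units.val, Units.val_injective⟩ := by
    ext x
    simp [eq_comm]
  rw [this, sum_map]
  rfl

theorem sum_pow (i : ℕ) : ∑ x : K, x ^ i = if i ≠ 0 ∧ q - 1 ∣ i then -1 else 0 := by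
  classical
  rcases eq_or_ne i 0 with rfl | hi
  · simp
  · rw [sum_pow_eq_sum_units_pow hi, sum_pow_units]
    simp [hi]

theorem sum_pow_of_lt_two_mul {i : ℕ} (hi : i < 2 * (q - 1)) :
    ∑ x : K, x ^ i = if i = q - 1 then -1 else 0 := by
  rw [sum_pow]
  congr 1
  apply propext
  constructor
  · rintro ⟨hi0, k, rfl⟩
    rcases k with _ | _ | k
    · simp at hi0
    · simp
    · nlinarith
  · rintro rfl
    exact ⟨(Nat.sub_pos_of_lt Fintype.one_lt_card).ne', dvd_rfl⟩

theorem sum_add_pow_mul_pow (c : K) {m n : ℕ} (hn : n ≤ q - 1) (hmn : m + n < 2 * (q - 1)) :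
    ∑ x : K, (x + c) ^ m * x ^ n = -(m.choose (q - 1 - n) : K) * c ^ (m + n - (q - 1)) := by
  have hsum : ∀ j ∈ range (m + 1), ∑ x : K, x ^ (j + n) = if j = q - 1 - n then -1 else 0 := by
    intro j hj
    rw [sum_pow_of_lt_two_mul (by grind)]
    grind
  calc ∑ x : K, (x + c) ^ m * x ^ n
      = ∑ j ∈ range (m + 1), m.choose j * c ^ (m - j) * ∑ x : K, x ^ (j + n) := by
        simp_rw [add_pow, sum_mul, mul_sum]
        rw [sum_comm]
        exact sum_congr rfl fun j _ => sum_congr rfl fun x _ => by ring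
    _ = ∑ j ∈ range (m + 1), if j = q - 1 - n then -(m.choose j * c ^ (m - j)) else 0 :=
        sum_congr rfl fun j hj => by rw [hsum j hj]; split_ifs <;> ring
    _ = -(m.choose (q - 1 - n) : K) * c ^ (m + n - (q - 1)) := by
        rw [sum_ite_eq']
        split_ifs with h
        · rw [show m - (q - 1 - n) = m + n - (q - 1) by grind]
          ring
        · rw [Nat.choose_eq_zero_of_lt (by grind)]
          simp

theorem sum_add_pow_mul_add_pow {a b : K} (hab : a ≠ b) {m n : ℕ} (hn : n ≤ q - 1)
    (hmn : m + n < 2 * (q - 1)) :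
    ∑ x : K, (a + x) ^ m * (b + x) ^ n = -(a - b) ^ (m + n) * (m.choose (q - 1 - n) : K) := by
  calc ∑ x : K, (a + x) ^ m * (b + x) ^ n
      = ∑ x : K, (x + (a - b)) ^ m * x ^ n :=
        Fintype.sum_equiv (Equiv.addLeft b) _ _ fun x => by simp only [Equiv.coe_addLeft]; ring
    _ = _ := by
        rw [sum_add_pow_mul_pow _ hn hmn]
        rcases le_or_gt (q - 1) (m + n) with h | h
        · rw [← pow_sub_mul_pow (a - b) h, pow_card_sub_one_eq_one _ (sub_ne_zero.2 hab)]
          ring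
        · rw [Nat.choose_eq_zero_of_lt (by omega)]
          simp

end FiniteField

theorem ZMod.sum_range_natCast {M : Type*} [AddCommMonoid M] (n : ℕ) [NeZero n] (f : ZMod n → M) :
    ∑ k ∈ range n, f k = ∑ x, f x :=
  Finset.sum_nbij' (↑) ZMod.val (fun _ _ => mem_univ _) (fun x _ => mem_range.2 (ZMod.val_lt x))
    (fun _ hk => ZMod.val_cast_of_lt (mem_range.1 hk)) (fun x _ => ZMod.natCast_zmod_val x)
    (fun _ _ => rfl)

theorem sum_product_two_shifts (p a b m n : ℕ) (hp : p.Prime)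
    (ha : 1 ≤ a ∧ a ≤ p - 1) (hb : 1 ≤ b ∧ b ≤ p - 1) (hab : a ≠ b)
    (hm : 1 ≤ m ∧ m ≤ p - 1) (hn : 1 ≤ n ∧ n ≤ p - 1)
    (h : ¬(m = p - 1 ∧ n = p - 1)) :
    (∑ k ∈ Finset.range p,
        ((a : ZMod p) + (k : ZMod p)) ^ m * ((b : ZMod p) + (k : ZMod p)) ^ n) =
      -((a : ZMod p) - (b : ZMod p)) ^ (m + n) * (m.choose (p - 1 - n) : ZMod p) := by
  have : Fact p.Prime := ⟨hp⟩
  have hab' : (a : ZMod p) ≠ b := by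
    rw [Ne, ZMod.natCast_eq_natCast_iff', Nat.mod_eq_of_lt (by omega), Nat.mod_eq_of_lt (by omega)]
    exact hab
  have key := FiniteField.sum_add_pow_mul_add_pow hab' (m := m) (n := n)
  rw [ZMod.card] at key
  rw [ZMod.sum_range_natCast p fun x => ((a : ZMod p) + x) ^ m * ((b : ZMod p) + x) ^ n]
  exact key hn.2 (by omega)
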